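/- Let {W^{(k)}}_{k≥0} with W^{(k)} = z^k + Σ_{l≥1} W^k_l z^{-l} evolve by the Sato System ∂W^{(k)}/∂t_j + z^j W^{(k)} = W^{(j+k)} + Σ_{l=1}^{j} W^k_l W^{(j-l)}, and let w = 1 + Σ_{l≥1} w_l z^{-l} evolve by ∂w/∂t_j + z^j w = Σ_{l=0}^{j} w_l W^{(j-l)} (with w_0 = 1). Define H^{(j)} by w·H^{(j)} = Σ_{l=0}^{j} w_{j-l} W^{(l)}. Then the operators satisfy the intertwining relation w·(∂/∂t_j + H^{(j)}) = (∂/∂t_j + z^j)·w, and consequently the H^{(j)} satisfy the Central System. -/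

import Mathlib

/- Formal Laurent series in `z⁻¹` are modelled as Hahn series in `ζ = z⁻¹`:
the coefficient of `z^{-l}` is the coefficient at index `l`, and the series `z`
is `HahnSeries.single (-1) 1`.  The coefficient ring `R` consists of functions
of the times, with derivations `dT j = ∂/∂t_j` acting coefficientwise. -/

variable {R : Type*} [CommRing R]

/-- Coefficientwise action of a derivation on Laurent series. -/
noncomputable def liftD (d : R →+ R) (f : HahnSeries ℤ R) : HahnSeries ℤ R where
  coeff n := d (f.coeff n)
  isPWO_support' := f.isPWO_support'.mono (by
    intro n hn
    simp only [Function.mem_support] at hn ⊢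
    intro h0
    exact hn (by rw [h0, map_zero]))

/-- The Laurent series `z`. -/
noncomputable def Zs (R : Type*) [CommRing R] : HahnSeries ℤ R :=
  HahnSeries.single (-1) 1

/-! The Darboux relation and the equation for `w` combine to `w H⁽ʲ⁾ = ∂ⱼ w + zʲ w`; with the
Leibniz rule this is the intertwining relation, and since `w = 1 + O(z⁻¹)` is not a zero divisor
and `∂ⱼ w = O(z⁻¹)`, it also gives `H⁽ʲ⁾ = zʲ + O(z⁻¹)`. For the Central System let `D` be the
difference of its two sides. By the intertwining relation and the Sato System, `w D` lies in the
span of the `W⁽ᵏ⁾`; a direct computation with `H⁽ʲ⁾ = zʲ + O(z⁻¹)` gives `D = O(z⁻¹)`, hence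
`w D = O(z⁻¹)`. As `W⁽ᵏ⁾ = zᵏ + O(z⁻¹)`, the coefficient of `W⁽ᵏ⁾` in an element of the span is
its coefficient of `zᵏ`, so `w D = 0` and `D = 0`. -/

open HahnSeries Submodule

/-- The series `O(z⁻¹)`, i.e. `z⁻¹ R⟦z⁻¹⟧`. -/
def orderTopPos (R : Type*) [CommRing R] : Submodule R (HahnSeries ℤ R) where
  carrier := {f | 0 < f.orderTop}
  add_mem' {f g} (hf : 0 < f.orderTop) (hg : 0 < g.orderTop) :=
    (lt_min hf hg).trans_le min_orderTop_le_orderTop_add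
  zero_mem' := by simp
  smul_mem' c f (hf : 0 < f.orderTop) := hf.trans_le (orderTop_le_orderTop_smul c f)

theorem mem_orderTopPos {f : HahnSeries ℤ R} : f ∈ orderTopPos R ↔ 0 < f.orderTop := Iff.rfl

theorem mem_orderTopPos_iff {f : HahnSeries ℤ R} :
    f ∈ orderTopPos R ↔ ∀ n ≤ 0, f.coeff n = 0 := by
  rw [mem_orderTopPos]
  refine ⟨fun hf n hn => coeff_eq_zero_of_lt_orderTop ((WithTop.coe_le_coe.mpr hn).trans_lt hf),
    fun hf => zero_lt_one.trans_le (le_orderTop_iff_forall.mpr fun n hn => hf n ?_)⟩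
  exact Int.lt_add_one_iff.mp (WithTop.coe_lt_coe.mp hn)

theorem mul_mem_orderTopPos {a b : HahnSeries ℤ R} (ha : a ∈ orderTopPos R)
    (hb : b ∈ orderTopPos R) : a * b ∈ orderTopPos R :=
  (mem_orderTopPos.mp hb |>.trans_le (le_add_of_nonneg_left (mem_orderTopPos.mp ha).le)).trans_le
    orderTop_add_le_mul

theorem orderTop_mul_of_sub_one_mem {w : HahnSeries ℤ R} (hw : w - 1 ∈ orderTopPos R)
    (f : HahnSeries ℤ R) : (w * f).orderTop = f.orderTop := by
  nontriviality R
  obtain ⟨hw0, hw1⟩ := (orderTop_self_sub_one_pos_iff w).mp (mem_orderTopPos.mp hw)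
  rcases eq_or_ne f 0 with rfl | hf
  · simp
  rw [orderTop_mul_of_ne_zero (by rwa [hw1, one_mul, leadingCoeff_ne_zero]), hw0, zero_add]

theorem mul_mem_orderTopPos_iff {w : HahnSeries ℤ R} (hw : w - 1 ∈ orderTopPos R)
    {f : HahnSeries ℤ R} : w * f ∈ orderTopPos R ↔ f ∈ orderTopPos R := by
  rw [mem_orderTopPos, mem_orderTopPos, orderTop_mul_of_sub_one_mem hw]

theorem eq_zero_of_mul_eq_zero_of_sub_one_mem {w : HahnSeries ℤ R} (hw : w - 1 ∈ orderTopPos R)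
    {f : HahnSeries ℤ R} (h : w * f = 0) : f = 0 := by
  rw [← orderTop_eq_top, ← orderTop_mul_of_sub_one_mem hw, h, orderTop_zero]

theorem hahnSeries_mul_smul_comm (c : R) (f g : HahnSeries ℤ R) : f * (c • g) = c • (f * g) := by
  rw [← single_zero_mul_eq_smul, ← single_zero_mul_eq_smul, mul_left_comm]

theorem Zs_pow (k : ℕ) : Zs R ^ k = single (-(k : ℤ)) 1 := by
  simp [Zs, single_pow]

theorem coeff_Zs_pow (k : ℕ) (n : ℤ) : (Zs R ^ k).coeff n = if n = -(k : ℤ) then 1 else 0 := by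
  rw [Zs_pow, coeff_single]
  congr

theorem sub_Zs_pow_mem_orderTopPos {f : HahnSeries ℤ R} {k : ℕ}
    (h1 : f.coeff (-(k : ℤ)) = 1) (hlow : ∀ n < -(k : ℤ), f.coeff n = 0)
    (hmid : ∀ n : ℤ, -(k : ℤ) < n → n ≤ 0 → f.coeff n = 0) :
    f - Zs R ^ k ∈ orderTopPos R := by
  refine mem_orderTopPos_iff.mpr fun n hn => ?_
  rw [coeff_sub, coeff_Zs_pow]
  rcases lt_trichotomy n (-(k : ℤ)) with h | rfl | h
  · rw [hlow n h, if_neg h.ne, sub_zero]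
  · rw [h1, if_pos rfl, sub_self]
  · rw [hmid n h hn, if_neg h.ne', sub_zero]

theorem coeff_neg_natCast_of_sub_Zs_pow_mem {f : HahnSeries ℤ R} {k : ℕ}
    (hf : f - Zs R ^ k ∈ orderTopPos R) (m : ℕ) :
    f.coeff (-(m : ℤ)) = if k = m then 1 else 0 := by
  have h := mem_orderTopPos_iff.mp hf (-(m : ℤ)) (by omega)
  rw [coeff_sub, coeff_Zs_pow, sub_eq_zero] at h
  rw [h]
  exact if_congr (by omega) rfl rfl

theorem coeff_sub_Zs_pow_of_pos (f : HahnSeries ℤ R) (k : ℕ) {n : ℤ} (hn : 0 < n) :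
    (f - Zs R ^ k).coeff n = f.coeff n := by
  rw [coeff_sub, coeff_Zs_pow, if_neg (by omega), sub_zero]

theorem Zs_pow_mul_sub_sum_smul_Zs_pow_mem {b : HahnSeries ℤ R} (hb : b ∈ orderTopPos R) (j : ℕ) :
    Zs R ^ j * b - ∑ l ∈ Finset.Icc 1 j, b.coeff l • Zs R ^ (j - l) ∈ orderTopPos R := by
  refine mem_orderTopPos_iff.mpr fun n hn => ?_
  rw [coeff_sub, Zs_pow, coeff_single_mul, one_mul, coeff_sum, sub_eq_zero]
  simp only [coeff_smul, coeff_Zs_pow, smul_eq_mul, mul_ite, mul_one, mul_zero]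
  by_cases h : 0 < n + j
  · rw [Finset.sum_eq_single_of_mem (n + j).toNat (Finset.mem_Icc.mpr ⟨by omega, by omega⟩),
      if_pos (by omega)]
    · congr 1
      omega
    · intro l hl hne
      rw [Finset.mem_Icc] at hl
      rw [if_neg (by omega)]
  · rw [mem_orderTopPos_iff.mp hb _ (by omega), Finset.sum_eq_zero]
    intro l hl
    rw [Finset.mem_Icc] at hl
    rw [if_neg (by omega)]

theorem Zs_pow_mul_sub_sum_smul_mem {H : ℕ → HahnSeries ℤ R}
    (hH : ∀ k, H k - Zs R ^ k ∈ orderTopPos R) {b : HahnSeries ℤ R} (hb : b ∈ orderTopPos R)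
    (j : ℕ) : Zs R ^ j * b - ∑ l ∈ Finset.Icc 1 j, b.coeff l • H (j - l) ∈ orderTopPos R := by
  have e : Zs R ^ j * b - ∑ l ∈ Finset.Icc 1 j, b.coeff l • H (j - l)
      = (Zs R ^ j * b - ∑ l ∈ Finset.Icc 1 j, b.coeff l • Zs R ^ (j - l))
        - ∑ l ∈ Finset.Icc 1 j, b.coeff l • (H (j - l) - Zs R ^ (j - l)) := by
    simp only [smul_sub, Finset.sum_sub_distrib]
    abel
  rw [e]
  exact sub_mem (Zs_pow_mul_sub_sum_smul_Zs_pow_mem hb j) (sum_mem fun l _ => smul_mem _ _ (hH _))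

theorem mul_mem_span_range {w : HahnSeries ℤ R} {H W : ℕ → HahnSeries ℤ R}
    (hwH : ∀ i, w * H i ∈ span R (Set.range W)) {f : HahnSeries ℤ R}
    (hf : f ∈ span R (Set.range H)) : w * f ∈ span R (Set.range W) := by
  induction hf using span_induction with
  | mem x hx =>
    obtain ⟨i, rfl⟩ := hx
    exact hwH i
  | zero => simp
  | add x y _ _ hx hy =>
    rw [mul_add]
    exact add_mem hx hy
  | smul c x _ hx =>
    rw [hahnSeries_mul_smul_comm]
    exact smul_mem _ _ hx

theorem eq_zero_of_mem_span_of_mem_orderTopPos {W : ℕ → HahnSeries ℤ R}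
    (hW : ∀ k, W k - Zs R ^ k ∈ orderTopPos R) {f : HahnSeries ℤ R}
    (hf : f ∈ span R (Set.range W)) (hf' : f ∈ orderTopPos R) : f = 0 := by
  obtain ⟨c, rfl⟩ := Finsupp.mem_span_range_iff_exists_finsupp.mp hf
  have hc : c = 0 := by
    ext m
    have h := mem_orderTopPos_iff.mp hf' (-(m : ℤ)) (by omega)
    simpa [Finsupp.sum, coeff_neg_natCast_of_sub_Zs_pow_mem (hW _)] using h
  simp [hc]

section Derivation

variable {d : R →+ R}

@[simp]
theorem liftD_coeff (f : HahnSeries ℤ R) (n : ℤ) : (liftD d f).coeff n = d (f.coeff n) := rfl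

@[simp]
theorem liftD_zero : liftD d (0 : HahnSeries ℤ R) = 0 := by
  ext n
  simp

theorem liftD_add (f g : HahnSeries ℤ R) : liftD d (f + g) = liftD d f + liftD d g := by
  ext n
  simp

theorem liftD_smul (hd : ∀ a b, d (a * b) = d a * b + a * d b) (c : R) (f : HahnSeries ℤ R) :
    liftD d (c • f) = d c • f + c • liftD d f := by
  ext n
  simp [hd]

theorem liftD_mul (hd : ∀ a b, d (a * b) = d a * b + a * d b) (f g : HahnSeries ℤ R) :
    liftD d (f * g) = liftD d f * g + f * liftD d g := by
  have hsupp : ∀ f : HahnSeries ℤ R, (liftD d f).support ⊆ f.support := fun f n hn h0 =>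
    hn (by rw [liftD_coeff, h0, map_zero])
  ext n
  rw [coeff_add, liftD_coeff, coeff_mul, coeff_mul_left' f.isPWO_support (hsupp f),
    coeff_mul_right' g.isPWO_support (hsupp g), map_sum, ← Finset.sum_add_distrib]
  exact Finset.sum_congr rfl fun _ _ => hd _ _

theorem liftD_Zs_pow (hd1 : d 1 = 0) (k : ℕ) : liftD d (Zs R ^ k) = 0 := by
  ext n
  rw [liftD_coeff, coeff_Zs_pow]
  split_ifs <;> simp [hd1]

theorem liftD_sub_Zs_pow (hd1 : d 1 = 0) (f : HahnSeries ℤ R) (k : ℕ) :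
    liftD d (f - Zs R ^ k) = liftD d f := by
  rw [← add_zero (liftD d (f - _)), ← liftD_Zs_pow hd1 k, ← liftD_add, sub_add_cancel]

theorem liftD_mem_orderTopPos {f : HahnSeries ℤ R} (hf : f ∈ orderTopPos R) :
    liftD d f ∈ orderTopPos R :=
  mem_orderTopPos_iff.mpr fun n hn => by rw [liftD_coeff, mem_orderTopPos_iff.mp hf n hn, map_zero]

theorem liftD_add_Zs_pow_mul_mem_span (hd : ∀ a b, d (a * b) = d a * b + a * d b)
    {W : ℕ → HahnSeries ℤ R} {j : ℕ}
    (hW : ∀ k, liftD d (W k) + Zs R ^ j * W k ∈ span R (Set.range W))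
    {f : HahnSeries ℤ R} (hf : f ∈ span R (Set.range W)) :
    liftD d f + Zs R ^ j * f ∈ span R (Set.range W) := by
  induction hf using span_induction with
  | mem x hx =>
    obtain ⟨k, rfl⟩ := hx
    exact hW k
  | zero => simp
  | add x y _ _ hx hy =>
    rw [liftD_add, mul_add, add_add_add_comm]
    exact add_mem hx hy
  | smul c x hx hDx =>
    rw [liftD_smul hd, hahnSeries_mul_smul_comm, add_assoc, ← smul_add]
    exact add_mem (smul_mem _ _ hx) (smul_mem _ _ hDx)

theorem mul_liftD_add_mul_eq (hd : ∀ a b, d (a * b) = d a * b + a * d b)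
    {w h : HahnSeries ℤ R} {j : ℕ} (hwh : w * h = liftD d w + Zs R ^ j * w)
    (f : HahnSeries ℤ R) :
    w * (liftD d f + h * f) = liftD d (w * f) + Zs R ^ j * (w * f) := by
  rw [liftD_mul hd]
  linear_combination f * hwh

theorem sub_Zs_pow_mem_of_mul_eq (hd1 : d 1 = 0) {w h : HahnSeries ℤ R} {j : ℕ}
    (hw : w - 1 ∈ orderTopPos R) (hwh : w * h = liftD d w + Zs R ^ j * w) :
    h - Zs R ^ j ∈ orderTopPos R := by
  rw [← mul_mem_orderTopPos_iff hw, mul_sub, hwh, mul_comm w, add_sub_cancel_right,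
    ← liftD_sub_Zs_pow hd1 w 0, pow_zero]
  exact liftD_mem_orderTopPos hw

/-- With `H i = zⁱ + O(z⁻¹)`, both sides are `z^{j+k} + (zʲ (H k - zᵏ))₊ + (zᵏ (H j - zʲ))₊`
up to `O(z⁻¹)`, where `(·)₊` keeps the powers `z⁰, z¹, …`. -/
theorem central_sub_mem (hd1 : d 1 = 0) {H : ℕ → HahnSeries ℤ R}
    (hH : ∀ k, H k - Zs R ^ k ∈ orderTopPos R) (j k : ℕ) :
    liftD d (H k) + H j * H k
      - (H (j + k) + ∑ l ∈ Finset.Icc 1 k, (H j).coeff l • H (k - l)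
        + ∑ l ∈ Finset.Icc 1 j, (H k).coeff l • H (j - l)) ∈ orderTopPos R := by
  set a := H j - Zs R ^ j with ha
  set b := H k - Zs R ^ k with hb
  have hcoeff : ∀ (f : HahnSeries ℤ R) (i : ℕ) (g : ℕ → HahnSeries ℤ R) (m : ℕ),
      ∑ l ∈ Finset.Icc 1 m, f.coeff l • g l
        = ∑ l ∈ Finset.Icc 1 m, (f - Zs R ^ i).coeff l • g l := fun f i g m =>
    Finset.sum_congr rfl fun l hl => by
      rw [coeff_sub_Zs_pow_of_pos f i (by simp at hl; omega)]
  rw [hcoeff (H j) j, hcoeff (H k) k, ← liftD_sub_Zs_pow hd1 (H k) k, ← ha, ← hb]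
  have e : liftD d b + H j * H k
      - (H (j + k) + ∑ l ∈ Finset.Icc 1 k, a.coeff l • H (k - l)
        + ∑ l ∈ Finset.Icc 1 j, b.coeff l • H (j - l))
      = liftD d b + a * b - (H (j + k) - Zs R ^ (j + k))
        + (Zs R ^ j * b - ∑ l ∈ Finset.Icc 1 j, b.coeff l • H (j - l))
        + (Zs R ^ k * a - ∑ l ∈ Finset.Icc 1 k, a.coeff l • H (k - l)) := by
    rw [ha, hb]
    ring
  rw [e]
  exact add_mem (add_mem (sub_mem (add_mem (liftD_mem_orderTopPos (hH k))
    (mul_mem_orderTopPos (hH j) (hH k))) (hH _)) (Zs_pow_mul_sub_sum_smul_mem hH (hH k) j))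
    (Zs_pow_mul_sub_sum_smul_mem hH (hH j) k)

end Derivation

/-- if `{W⁽ᵏ⁾}` evolves by the Sato System, `w` evolves by the
Darboux–Sato equation, and `H⁽ʲ⁾` is defined by the Darboux relation
`w·H⁽ʲ⁾ = Σ_{l=0}^j w_{j-l} W⁽ˡ⁾`, then the operators intertwine:
`w·(∂/∂t_j + H⁽ʲ⁾) = (∂/∂t_j + z^j)·w`, and consequently the `H⁽ʲ⁾` satisfy
the Central System. -/
theorem darboux_intertwining (dT : ℕ → R →+ R)
    (hdT : ∀ j, ∀ a b : R, dT j (a * b) = dT j a * b + a * dT j b)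
    (W : ℕ → HahnSeries ℤ R) (w : HahnSeries ℤ R) (H : ℕ → HahnSeries ℤ R)
    (hWshape : ∀ k, (W k).coeff (-(k : ℤ)) = 1 ∧
      (∀ n : ℤ, n < -(k : ℤ) → (W k).coeff n = 0) ∧
      (∀ n : ℤ, -(k : ℤ) < n → n ≤ 0 → (W k).coeff n = 0))
    (hwshape : w.coeff 0 = 1 ∧ ∀ n : ℤ, n < 0 → w.coeff n = 0)
    (hSato : ∀ j k, liftD (dT j) (W k) + (Zs R) ^ j * W k
        = W (j + k) + ∑ l ∈ Finset.Icc 1 j, ((W k).coeff (l : ℤ)) • W (j - l))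
    (hweq : ∀ j, liftD (dT j) w + (Zs R) ^ j * w
        = ∑ l ∈ Finset.range (j + 1), (w.coeff (l : ℤ)) • W (j - l))
    (hDarboux : ∀ j, w * H j
        = ∑ l ∈ Finset.range (j + 1), (w.coeff ((j - l : ℕ) : ℤ)) • W l) :
    (∀ j, ∀ f : HahnSeries ℤ R,
        w * (liftD (dT j) f + H j * f)
          = liftD (dT j) (w * f) + (Zs R) ^ j * (w * f)) ∧
    (∀ j k, liftD (dT j) (H k) + H j * H k
        = H (j + k)
          + ∑ l ∈ Finset.Icc 1 k, ((H j).coeff (l : ℤ)) • H (k - l)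
          + ∑ l ∈ Finset.Icc 1 j, ((H k).coeff (l : ℤ)) • H (j - l)) := by
  have hd1 : ∀ j, dT j 1 = 0 := fun j => by simpa using hdT j 1 1
  have hw : w - 1 ∈ orderTopPos R := by
    simpa using sub_Zs_pow_mem_orderTopPos (R := R) (k := 0) hwshape.1 hwshape.2 (by omega)
  have hW : ∀ k, W k - Zs R ^ k ∈ orderTopPos R := fun k =>
    sub_Zs_pow_mem_orderTopPos (hWshape k).1 (hWshape k).2.1 (hWshape k).2.2
  have hwH : ∀ j, w * H j = liftD (dT j) w + Zs R ^ j * w := fun j => by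
    rw [hDarboux, hweq, ← Finset.sum_range_reflect]
    refine Finset.sum_congr rfl fun l hl => ?_
    rw [add_tsub_cancel_right, Nat.sub_sub_self (Finset.mem_range_succ_iff.mp hl)]
  have hwH_mem : ∀ j, w * H j ∈ span R (Set.range W) := fun j => by
    rw [hDarboux]
    exact sum_smul_mem _ _ fun _ _ => subset_span ⟨_, rfl⟩
  have hSato_mem : ∀ j k, liftD (dT j) (W k) + Zs R ^ j * W k ∈ span R (Set.range W) :=
    fun j k => by
      rw [hSato]
      exact add_mem (subset_span ⟨_, rfl⟩) (sum_smul_mem _ _ fun _ _ => subset_span ⟨_, rfl⟩)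
  refine ⟨fun j => mul_liftD_add_mul_eq (hdT j) (hwH j), fun j k => ?_⟩
  have hH : ∀ k, H k - Zs R ^ k ∈ orderTopPos R := fun k =>
    sub_Zs_pow_mem_of_mul_eq (hd1 k) hw (hwH k)
  rw [← sub_eq_zero]
  refine eq_zero_of_mul_eq_zero_of_sub_one_mem hw (eq_zero_of_mem_span_of_mem_orderTopPos hW ?_
    ((mul_mem_orderTopPos_iff hw).mpr (central_sub_mem (hd1 j) hH j k)))
  rw [mul_sub, mul_liftD_add_mul_eq (hdT j) (hwH j)]
  refine sub_mem (liftD_add_Zs_pow_mul_mem_span (hdT j) (hSato_mem j) (hwH_mem k))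
    (mul_mem_span_range hwH_mem ?_)
  exact add_mem (add_mem (subset_span ⟨_, rfl⟩)
    (sum_smul_mem _ _ fun _ _ => subset_span ⟨_, rfl⟩))
    (sum_smul_mem _ _ fun _ _ => subset_span ⟨_, rfl⟩)
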